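/- arXiv:1802.03348 — 3 statements merged into one kernel-verified Lean document; each statement's English description precedes it below -/
import Mathlib

section
/- Suppose s₁ and s₂ are entire functions on ℂ, k is a nonnegative integer, and for all z ≠ 0 we have s₁(z) = z^k · s₂(1/z). Then s₁ is a polynomial of degree at most k. -/
/-!
Induction on `k`. For `k = 0`, `s₁(z) = s₂(1/z) → s₂(0)` as `z → ∞`, so `s₁` is constant by
Liouville. For `k + 1`, write `s₁(z) = s₁(0) + z g(z)` with `g = dslope s₁ 0` entire; then
`g(z) = z^k (s₂(1/z) - s₁(0) (1/z)^(k+1))` for `z ≠ 0`, and the bracket is again an entire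
function of `1/z`, so the induction hypothesis makes `g` a polynomial of degree at most `k`.
-/

open Filter Polynomial Topology

theorem Differentiable.dslope {E : Type*} [NormedAddCommGroup E] [NormedSpace ℂ E]
    [CompleteSpace E] {f : ℂ → E} (hf : Differentiable ℂ f) (c : ℂ) :
    Differentiable ℂ (dslope f c) := by
  rw [← differentiableOn_univ] at hf ⊢
  exact (Complex.differentiableOn_dslope univ_mem).mpr hf

theorem Differentiable.eq_const_of_eq_comp_inv {E : Type*} [NormedAddCommGroup E]
    [NormedSpace ℂ E] {f g : ℂ → E} (hf : Differentiable ℂ f) (hg : ContinuousAt g 0)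
    (h : ∀ z ≠ 0, f z = g z⁻¹) : f = fun _ ↦ g 0 := by
  refine hf.eq_const_of_tendsto_cocompact ?_
  rw [← Metric.cobounded_eq_cocompact]
  have hlim : Tendsto (fun z ↦ g z⁻¹) (Bornology.cobounded ℂ) (𝓝 (g 0)) :=
    hg.tendsto.comp tendsto_inv₀_cobounded
  refine hlim.congr' ?_
  filter_upwards [Bornology.isBounded_singleton (x := (0 : ℂ))] with z hz
  exact (h z hz).symm

theorem dslope_zero_eq_pow_mul_of_eq_pow_succ_mul {𝕜 : Type*} [NontriviallyNormedField 𝕜]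
    {f g : 𝕜 → 𝕜} {k : ℕ} (h : ∀ z ≠ 0, f z = z ^ (k + 1) * g z⁻¹) {z : 𝕜} (hz : z ≠ 0) :
    dslope f 0 z = z ^ k * (g z⁻¹ - f 0 * z⁻¹ ^ (k + 1)) := by
  rw [dslope_of_ne _ hz, slope_def_field, h z hz, inv_pow]
  field_simp
  ring

theorem eval_C_add_mul_X_of_dslope_eq_eval {𝕜 : Type*} [NontriviallyNormedField 𝕜]
    {f : 𝕜 → 𝕜} {q : 𝕜[X]} (hq : ∀ z, dslope f 0 z = q.eval z) (z : 𝕜) :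
    f z = (C (f 0) + q * X).eval z := by
  have := sub_smul_dslope f 0 z
  rw [hq, sub_zero, smul_eq_mul] at this
  simp only [eval_add, eval_C, eval_mul, eval_X]
  linear_combination -this

theorem degree_C_add_mul_X_le {R : Type*} [Semiring R] [Nontrivial R] (c : R) {q : R[X]}
    {k : ℕ} (hq : q.degree ≤ k) : (C c + q * X).degree ≤ ↑(k + 1) := by
  refine degree_add_le_of_degree_le (degree_C_le.trans (WithBot.coe_le_coe.mpr k.succ.zero_le)) ?_
  rw [degree_mul_X, Nat.cast_succ]
  exact add_le_add_left hq 1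

/-- If `s₁, s₂` are entire and `s₁(z) = z^k s₂(1/z)` for `z ≠ 0`, then `s₁` is a
polynomial of degree at most `k`. -/
theorem stmt2 (s₁ s₂ : ℂ → ℂ) (h₁ : Differentiable ℂ s₁) (h₂ : Differentiable ℂ s₂)
    (k : ℕ) (h : ∀ z : ℂ, z ≠ 0 → s₁ z = z ^ k * s₂ (1 / z)) :
    ∃ p : Polynomial ℂ, p.degree ≤ (k : ℕ∞) ∧ ∀ z : ℂ, s₁ z = p.eval z := by
  simp only [one_div] at h
  induction k generalizing s₁ s₂ with
  | zero =>
    refine ⟨C (s₂ 0), degree_C_le, fun z ↦ ?_⟩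
    rw [h₁.eq_const_of_eq_comp_inv h₂.continuous.continuousAt (by simpa using h), eval_C]
  | succ k ih =>
    obtain ⟨q, hq_deg, hq⟩ := ih (dslope s₁ 0) (fun w ↦ s₂ w - s₁ 0 * w ^ (k + 1))
      (h₁.dslope 0) (by fun_prop) fun z hz ↦ dslope_zero_eq_pow_mul_of_eq_pow_succ_mul h hz
    exact ⟨C (s₁ 0) + q * X, degree_C_add_mul_X_le _ hq_deg, eval_C_add_mul_X_of_dslope_eq_eval hq⟩
end

section
/- Suppose s₁ and s₂ are entire functions on ℂ, k is a nonnegative integer, and s₁(z) = z^k · s₂(1/z) for all z ≠ 0. If s₁(z) = Σ aₙ zⁿ and s₂(z) = Σ bₙ zⁿ are the Taylor expansions at 0, then aₙ = 0 for n > k, bₙ = 0 for n > k, and bₙ = a_{k−n} for 0 ≤ n ≤ k. -/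
/-!
Near infinity `s₁(z) = z^k s₂(1/z)` with `s₂` bounded on the closed unit disc, so
`|s₁(z)| ≤ C |z|^k` for `|z| ≥ 1`. Cauchy's estimate on circles of radius `R → ∞` then kills
every Taylor coefficient `aₙ = s₁⁽ⁿ⁾(0)/n!` with `n > k`, so `s₁` is a polynomial of degree `≤ k`.
Hence `s₂(z) = z^k s₁(1/z) = Σ_{n ≤ k} a_{k-n} zⁿ` for `z ≠ 0`, by continuity for all `z`, and
uniqueness of power series coefficients gives the `bₙ`.
-/

open Filter Finset Metric Nat

theorem hasFPowerSeriesOnBall_ofScalars_of_forall_hasSum {a : ℕ → ℂ} {f : ℂ → ℂ}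
    (ha : ∀ z : ℂ, HasSum (fun n => a n * z ^ n) (f z)) :
    HasFPowerSeriesOnBall f (FormalMultilinearSeries.ofScalars ℂ a) 0 ⊤ := by
  have hrad : (FormalMultilinearSeries.ofScalars ℂ a).radius = ⊤ := by
    refine FormalMultilinearSeries.radius_eq_top_of_summable_norm _ fun r => ?_
    refine (summable_norm_iff.2 (ha r).summable).congr fun n => ?_
    simp
  refine ⟨hrad.ge, by simp, fun {z} _ => ?_⟩
  simpa [FormalMultilinearSeries.ofScalars_apply_eq, mul_comm] using ha z

theorem coeff_eq_of_forall_hasSum {a c : ℕ → ℂ} {f : ℂ → ℂ}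
    (ha : ∀ z : ℂ, HasSum (fun n => a n * z ^ n) (f z))
    (hc : ∀ z : ℂ, HasSum (fun n => c n * z ^ n) (f z)) : a = c :=
  FormalMultilinearSeries.ofScalars_series_injective ℂ ℂ <|
    HasFPowerSeriesAt.eq_formalMultilinearSeries
      (hasFPowerSeriesOnBall_ofScalars_of_forall_hasSum ha).hasFPowerSeriesAt
      (hasFPowerSeriesOnBall_ofScalars_of_forall_hasSum hc).hasFPowerSeriesAt

theorem coeff_eq_inv_factorial_mul_iteratedDeriv {a : ℕ → ℂ} {f : ℂ → ℂ}
    (hf : Differentiable ℂ f) (ha : ∀ z : ℂ, HasSum (fun n => a n * z ^ n) (f z)) (n : ℕ) :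
    a n = (n ! : ℂ)⁻¹ * iteratedDeriv n f 0 := by
  refine congrFun (coeff_eq_of_forall_hasSum (c := fun m => (m ! : ℂ)⁻¹ * iteratedDeriv m f 0)
    ha fun z => ?_) n
  have taylor := Complex.hasSum_taylorSeries_of_entire hf 0 z
  simp only [sub_zero, smul_eq_mul] at taylor
  convert! taylor using 2 with m
  ring

theorem Differentiable.iteratedDeriv_eq_zero_of_norm_le_mul_pow {E : Type*}
    [NormedAddCommGroup E] [NormedSpace ℂ E] [CompleteSpace E] {f : ℂ → E}
    (hf : Differentiable ℂ f) {C : ℝ} {k n : ℕ} (hkn : k < n)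
    (hC : ∀ z : ℂ, 1 ≤ ‖z‖ → ‖f z‖ ≤ C * ‖z‖ ^ k) : iteratedDeriv n f 0 = 0 := by
  have hC₀ : 0 ≤ C := by simpa using (norm_nonneg _).trans (hC 1 (by simp))
  have cauchy : ∀ R : ℕ, 1 ≤ R → ‖iteratedDeriv n f 0‖ ≤ n ! * C / R := by
    intro R hR
    have hR' : (1 : ℝ) ≤ R := by exact_mod_cast hR
    calc ‖iteratedDeriv n f 0‖ ≤ n ! * (C * R ^ k) / R ^ n :=
          Complex.norm_iteratedDeriv_le_of_forall_mem_sphere_norm_le n (by positivity)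
            hf.diffContOnCl fun z hz => by
              rw [mem_sphere_zero_iff_norm] at hz
              simpa [hz] using hC z (hz ▸ hR')
      _ = n ! * C / R ^ (n - k) := by
          rw [pow_sub₀ _ (by positivity) hkn.le]
          field_simp
      _ ≤ n ! * C / R := by
          gcongr
          exact le_self_pow₀ hR' (by omega)
  exact norm_le_zero_iff.1 <| ge_of_tendsto (tendsto_const_div_atTop_nhds_zero_nat _)
    (eventually_atTop.2 ⟨1, cauchy⟩)

theorem hasSum_mul_pow_of_forall_lt_eq_zero {a : ℕ → ℂ} {k : ℕ} (ha : ∀ n, k < n → a n = 0)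
    (z : ℂ) : HasSum (fun n => a n * z ^ n) (∑ n ∈ range (k + 1), a n * z ^ n) :=
  hasSum_sum_of_ne_finset_zero fun n hn => by
    rw [ha n (by simpa using hn), zero_mul]

theorem exists_norm_le_mul_pow_of_eq_pow_mul_one_div {f g : ℂ → ℂ} {k : ℕ} (hg : Continuous g)
    (h : ∀ z : ℂ, z ≠ 0 → f z = z ^ k * g (1 / z)) :
    ∃ C, ∀ z : ℂ, 1 ≤ ‖z‖ → ‖f z‖ ≤ C * ‖z‖ ^ k := by
  obtain ⟨C, hC⟩ := (isCompact_closedBall (0 : ℂ) 1).exists_bound_of_continuousOn hg.continuousOn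
  refine ⟨C, fun z hz => ?_⟩
  rw [h z (norm_pos_iff.1 (by linarith)), norm_mul, norm_pow, mul_comm]
  gcongr
  refine hC _ ?_
  simpa using inv_le_one_of_one_le₀ hz

theorem eq_pow_mul_one_div_symm {f g : ℂ → ℂ} {k : ℕ}
    (h : ∀ z : ℂ, z ≠ 0 → f z = z ^ k * g (1 / z)) (z : ℂ) (hz : z ≠ 0) :
    g z = z ^ k * f (1 / z) := by
  rw [h _ (one_div_ne_zero hz), one_div_one_div, ← mul_assoc, ← mul_pow, mul_one_div_cancel hz,
    one_pow, one_mul]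

theorem pow_mul_sum_one_div_pow {z : ℂ} (hz : z ≠ 0) (k : ℕ) (a : ℕ → ℂ) :
    z ^ k * ∑ i ∈ range (k + 1), a i * (1 / z) ^ i =
      ∑ n ∈ range (k + 1), (if n ≤ k then a (k - n) else 0) * z ^ n := by
  rw [← sum_range_reflect, mul_sum]
  refine sum_congr rfl fun n hn => ?_
  have hnk : n ≤ k := Nat.lt_succ_iff.1 (mem_range.1 hn)
  rw [if_pos hnk, Nat.add_sub_cancel, one_div, inv_pow, ← mul_assoc, mul_comm (z ^ k),
    mul_assoc, ← pow_sub₀ z hz (Nat.sub_le k n), Nat.sub_sub_self hnk]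

/-- Coefficient matching for sections of `O(k)` over `ℂP¹`: if `s₁(z) = z^k s₂(1/z)`
for `z ≠ 0`, with Taylor expansions `s₁ = Σ aₙ zⁿ`, `s₂ = Σ bₙ zⁿ` at `0`, then
`aₙ = 0` and `bₙ = 0` for `n > k`, and `bₙ = a_(k−n)` for `n ≤ k`. -/
theorem stmt3 (s₁ s₂ : ℂ → ℂ) (h₁ : Differentiable ℂ s₁) (h₂ : Differentiable ℂ s₂)
    (k : ℕ) (h : ∀ z : ℂ, z ≠ 0 → s₁ z = z ^ k * s₂ (1 / z))
    (a b : ℕ → ℂ)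
    (ha : ∀ z : ℂ, HasSum (fun n => a n * z ^ n) (s₁ z))
    (hb : ∀ z : ℂ, HasSum (fun n => b n * z ^ n) (s₂ z)) :
    (∀ n : ℕ, k < n → a n = 0) ∧ (∀ n : ℕ, k < n → b n = 0) ∧
    (∀ n : ℕ, n ≤ k → b n = a (k - n)) := by
  obtain ⟨C, hC⟩ := exists_norm_le_mul_pow_of_eq_pow_mul_one_div h₂.continuous h
  have ha₀ : ∀ n, k < n → a n = 0 := fun n hkn => by
    rw [coeff_eq_inv_factorial_mul_iteratedDeriv h₁ ha,
      h₁.iteratedDeriv_eq_zero_of_norm_le_mul_pow hkn hC, mul_zero]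
  set c : ℕ → ℂ := fun n => if n ≤ k then a (k - n) else 0
  have hs₂ : s₂ = fun z => ∑ n ∈ range (k + 1), c n * z ^ n :=
    Continuous.ext_on (dense_compl_singleton 0) h₂.continuous (by fun_prop) fun z hz => by
      rw [eq_pow_mul_one_div_symm h z hz,
        (ha _).unique (hasSum_mul_pow_of_forall_lt_eq_zero ha₀ _), pow_mul_sum_one_div_pow hz]
  have hbc : b = c := coeff_eq_of_forall_hasSum hb fun z => by
    rw [hs₂]
    exact hasSum_mul_pow_of_forall_lt_eq_zero (fun n hkn => if_neg hkn.not_ge) z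
  subst hbc
  exact ⟨ha₀, fun n hkn => if_neg hkn.not_ge, fun n hnk => if_pos hnk⟩
end

section
/- Let 𝔤 = V_N ⊕ V_R be a Lie algebra with V_N a subalgebra, and u the projection onto V_R. Define the bracket [ξ,η]₀ := T[u](ξ,η) where T[u](ξ,η) = u²[ξ,η] − u([uξ,η]+[ξ,uη]) + [uξ,uη]. Then [·,·]₀ satisfies [V_N,𝔤]₀ = 0 and [V_R,V_R]₀ ⊆ V_N; consequently [[ξ,η]₀, ζ]₀ = 0 for all ξ,η,ζ, so (𝔤,[·,·]₀) is a 2-step nilpotent Lie algebra. -/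
/-!
`T[u]` is built only from `u` and the bracket, so it is antisymmetric for any `u`. When `u` is
an idempotent whose kernel is a subalgebra, `u ∘ T[u]` expands to `u ⁅ξ - u ξ, η - u η⁆`, which
vanishes, so `T[u]` takes values in `ker u`; and `T[u]` vanishes as soon as one argument lies in
`ker u`. Hence every iterated contracted bracket is zero, which gives nilpotency and, trivially,
the Jacobi identity. For the complementary decomposition `𝔤 = V_N ⊕ V_R`, `u` is the projection
onto `V_R` along `V_N`, so `ker u = V_N`.
-/

namespace LinearMap

variable {R L : Type*} [Semiring R] [LieRing L] [Module R L]

def contractedBracket (u : L →ₗ[R] L) (ξ η : L) : L :=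
  u (u ⁅ξ, η⁆) - u (⁅u ξ, η⁆ + ⁅ξ, u η⁆) + ⁅u ξ, u η⁆

theorem contractedBracket_swap (u : L →ₗ[R] L) (ξ η : L) :
    u.contractedBracket ξ η = -u.contractedBracket η ξ := by
  rw [contractedBracket, contractedBracket, ← lie_skew η ξ, ← lie_skew (u η) ξ,
    ← lie_skew η (u ξ), ← lie_skew (u η) (u ξ)]
  simp only [map_neg, map_add]
  abel

section IdempotentWithSubalgebraKernel

variable {u : L →ₗ[R] L} (hu : IsIdempotentElem u)
  (hker : ∀ x ∈ ker u, ∀ y ∈ ker u, ⁅x, y⁆ ∈ ker u)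
include hu

theorem apply_apply_of_isIdempotentElem (x : L) : u (u x) = u x :=
  LinearMap.congr_fun hu x

theorem sub_apply_mem_ker_of_isIdempotentElem (x : L) : x - u x ∈ ker u := by
  rw [mem_ker, map_sub, apply_apply_of_isIdempotentElem hu, sub_self]

include hker

theorem contractedBracket_eq_zero_of_left_mem_ker {ξ : L} (hξ : ξ ∈ ker u) (η : L) :
    u.contractedBracket ξ η = 0 := by
  rw [mem_ker] at hξ
  have hkill : u ⁅ξ, η - u η⁆ = 0 := hker _ hξ _ (sub_apply_mem_ker_of_isIdempotentElem hu η)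
  rw [lie_sub, map_sub, sub_eq_zero] at hkill
  simp only [contractedBracket, hξ, zero_lie, zero_add, add_zero, hkill,
    apply_apply_of_isIdempotentElem hu, sub_self]

theorem contractedBracket_eq_zero_of_right_mem_ker (ξ : L) {η : L} (hη : η ∈ ker u) :
    u.contractedBracket ξ η = 0 := by
  rw [contractedBracket_swap, contractedBracket_eq_zero_of_left_mem_ker hu hker hη, neg_zero]

theorem contractedBracket_mem_ker (ξ η : L) : u.contractedBracket ξ η ∈ ker u := by
  have hkill : u ⁅ξ - u ξ, η - u η⁆ = 0 :=
    hker _ (sub_apply_mem_ker_of_isIdempotentElem hu ξ) _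
      (sub_apply_mem_ker_of_isIdempotentElem hu η)
  rw [mem_ker, ← hkill]
  simp only [contractedBracket, sub_lie, lie_sub, map_add, map_sub,
    apply_apply_of_isIdempotentElem hu]
  abel

theorem contractedBracket_contractedBracket_left (ξ η ζ : L) :
    u.contractedBracket (u.contractedBracket ξ η) ζ = 0 :=
  contractedBracket_eq_zero_of_left_mem_ker hu hker (contractedBracket_mem_ker hu hker ξ η) ζ

theorem contractedBracket_contractedBracket_right (ξ η ζ : L) :
    u.contractedBracket ξ (u.contractedBracket η ζ) = 0 :=
  contractedBracket_eq_zero_of_right_mem_ker hu hker ξ (contractedBracket_mem_ker hu hker η ζ)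

theorem contractedBracket_leibniz (ξ η ζ : L) :
    u.contractedBracket ξ (u.contractedBracket η ζ) =
      u.contractedBracket (u.contractedBracket ξ η) ζ +
        u.contractedBracket η (u.contractedBracket ξ ζ) := by
  simp only [contractedBracket_contractedBracket_left hu hker,
    contractedBracket_contractedBracket_right hu hker, add_zero]

end IdempotentWithSubalgebraKernel

end LinearMap

theorem Submodule.eq_projection_of_apply_eq_self_of_apply_eq_zero {R E : Type*} [Ring R]
    [AddCommGroup E] [Module R E] {p q : Submodule R E} (hpq : IsCompl p q) {u : E →ₗ[R] E}
    (hp : ∀ x ∈ p, u x = x) (hq : ∀ x ∈ q, u x = 0) : u = p.projection q hpq :=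
  LinearMap.ext_on_codisjoint hpq.codisjoint
    (fun x hx => by rw [hp x hx, projection_apply_of_mem_left hpq hx])
    (fun x hx => by rw [hq x hx, projection_apply_of_mem_right hpq hx])

/-- The anti-Inönü–Wigner contracted bracket `[ξ,η]₀ = T[u](ξ,η)` kills `V_N`, sends
`V_R × V_R` into `V_N`, and is 2-step nilpotent: `(𝔤,[·,·]₀)` is a 2-step nilpotent
Lie algebra. -/
theorem stmt12 {K L : Type*} [Field K] [LieRing L] [LieAlgebra K L]
    (VN VR : Submodule K L) (hcompl : IsCompl VN VR)
    (u : L →ₗ[K] L) (huN : ∀ x ∈ VN, u x = 0) (huR : ∀ x ∈ VR, u x = x)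
    (hsub : ∀ x ∈ VN, ∀ y ∈ VN, ⁅x, y⁆ ∈ VN) :
    ∀ b : L → L → L,
      (b = fun ξ η => u (u ⁅ξ, η⁆) - u (⁅u ξ, η⁆ + ⁅ξ, u η⁆) + ⁅u ξ, u η⁆) →
      (∀ ξ ∈ VN, ∀ η : L, b ξ η = 0) ∧
      (∀ ξ ∈ VR, ∀ η ∈ VR, b ξ η ∈ VN) ∧
      (∀ ξ η : L, b ξ η = - b η ξ) ∧
      (∀ ξ η ζ : L, b (b ξ η) ζ = 0) ∧
      (∀ ξ η ζ : L, b ξ (b η ζ) = b (b ξ η) ζ + b η (b ξ ζ)) := by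
  rintro b rfl
  have hproj : u = VR.projection VN hcompl.symm :=
    Submodule.eq_projection_of_apply_eq_self_of_apply_eq_zero hcompl.symm huR huN
  have hu : IsIdempotentElem u := hproj ▸ Submodule.isIdempotentElem_projection _
  have hkerN : LinearMap.ker u = VN := hproj ▸ Submodule.ker_projection _
  have hker : ∀ x ∈ LinearMap.ker u, ∀ y ∈ LinearMap.ker u, ⁅x, y⁆ ∈ LinearMap.ker u :=
    hkerN ▸ hsub
  exact ⟨fun ξ hξ => u.contractedBracket_eq_zero_of_left_mem_ker hu hker (hkerN ▸ hξ),
    fun ξ _ η _ => hkerN ▸ u.contractedBracket_mem_ker hu hker ξ η,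
    u.contractedBracket_swap,
    u.contractedBracket_contractedBracket_left hu hker,
    u.contractedBracket_leibniz hu hker⟩
end
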